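/- arXiv:1904.04448 — 5 statements merged into one kernel-verified Lean document; each statement's English description precedes it below -/
import Mathlib

section
/- Let X be a vector space with a complete invariant metric d. If f : [a,b] → X is Riemann integrable (i.e., there exists x̄ ∈ X such that for every ε > 0 there is δ > 0 with d(f(Δ), x̄) < ε for all tagged partitions Δ of [a,b] with mesh |Δ| < δ, where f(Δ) = Σᵢ (tᵢ − tᵢ₋₁) f(sᵢ)), then f is bounded, i.e., there exists L > 0 with d(0, f(t)) ≤ L for all t ∈ [a,b]. -/
open Set MeasureTheory

/-- A tagged partition of `[a,b]`: points `a = t 0 < t 1 < ⋯ < t n = b`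
with tags `s i ∈ [t i, t (i+1)]`. -/
structure TaggedPartition (a b : ℝ) where
  n : ℕ
  t : ℕ → ℝ
  s : ℕ → ℝ
  npos : 0 < n
  left : t 0 = a
  right : t n = b
  mono : ∀ i < n, t i < t (i + 1)
  tag_mem : ∀ i < n, s i ∈ Set.Icc (t i) (t (i + 1))

/-- The mesh of the partition is `< δ`. -/
def TaggedPartition.MeshLT {a b : ℝ} (P : TaggedPartition a b) (δ : ℝ) : Prop :=
  ∀ i < P.n, P.t (i + 1) - P.t i < δ

/-- The set of partition points of a tagged partition. -/
def TaggedPartition.points {a b : ℝ} (P : TaggedPartition a b) : Set ℝ :=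
  {x | ∃ i ≤ P.n, P.t i = x}

/-- The Riemann sum `f(Δ) = Σᵢ (tᵢ₊₁ - tᵢ) • f(sᵢ)`. -/
def riemannSum {X : Type*} [AddCommGroup X] [Module ℝ X]
    (f : ℝ → X) {a b : ℝ} (P : TaggedPartition a b) : X :=
  ∑ i ∈ Finset.range P.n, (P.t (i + 1) - P.t i) • f (P.s i)

/-- `f` has Riemann integral `x` on `[a,b]` (mesh-based definition, metric `dist`). -/
def HasRiemannIntegral {X : Type*} [MetricSpace X] [AddCommGroup X] [Module ℝ X]
    (f : ℝ → X) (a b : ℝ) (x : X) : Prop :=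
  ∀ ε > 0, ∃ δ > 0, ∀ P : TaggedPartition a b, P.MeshLT δ →
    dist (riemannSum f P) x < ε

/-!
Fix `δ` for `ε = 1` and a partition `P` of mesh `< δ`. Cutting a cell of `P` at an extra point
`u`, with tag `sL` left of `u` and `sR` right of it, keeps the mesh `< δ`, and moving `u` by `r`
changes the Riemann sum by exactly `r • (f sL - f sR)`; so this vector lies within `2` of `0`.
Scalar multiplication need not be continuous, but invariance gives `d(m • x, 0) ≤ m d(x, 0)`, so
`r = 1/m` bounds `d(f sL, f sR)` by `2m`. With `m` large compared with the cell lengths, every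
point can be paired in this way with an endpoint of its cell, and `f` is bounded on the finitely
many partition points.
-/

namespace TaggedPartition

variable {a b : ℝ}

/-- Cell `j` of `P` is cut at `v` into cells `j` and `j + 1`; the later cells move up by one. -/
def splitCell (P : TaggedPartition a b) (j : ℕ) (hj : j < P.n) (v sL sR : ℝ)
    (hv : v ∈ Ioo (P.t j) (P.t (j + 1))) (hsL : sL ∈ Icc (P.t j) v)
    (hsR : sR ∈ Icc v (P.t (j + 1))) : TaggedPartition a b where
  n := P.n + 1
  t i := if i ≤ j then P.t i else if i = j + 1 then v else P.t (i - 1)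
  s i := if i < j then P.s i else if i = j then sL else if i = j + 1 then sR else P.s (i - 1)
  npos := Nat.succ_pos _
  left := by simp [P.left]
  right := by simp [show ¬P.n + 1 ≤ j by omega, hj.ne', P.right]
  mono i hi := by
    rcases lt_trichotomy i j with h | rfl | h
    · simp only [if_pos h.le, if_pos (Nat.succ_le_of_lt h)]
      exact P.mono i (by omega)
    · simpa using hv.1
    · obtain rfl | h' := (Nat.succ_le_of_lt h).eq_or_lt
      · simpa using hv.2
      · have := P.mono (i - 1) (by omega)
        simp only [if_neg (show ¬i ≤ j by omega), if_neg (show ¬i = j + 1 by omega),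
          if_neg (show ¬i + 1 ≤ j by omega), if_neg (show ¬i + 1 = j + 1 by omega)]
        rwa [Nat.sub_add_cancel (by omega), ← Nat.add_sub_cancel i 1] at this
  tag_mem i hi := by
    rcases lt_trichotomy i j with h | rfl | h
    · simp only [if_pos h, if_pos h.le, if_pos (Nat.succ_le_of_lt h)]
      exact P.tag_mem i (by omega)
    · simpa using hsL
    · obtain rfl | h' := (Nat.succ_le_of_lt h).eq_or_lt
      · simpa using hsR
      · have := P.tag_mem (i - 1) (by omega)
        simp only [if_neg (show ¬i < j by omega), if_neg (show ¬i = j by omega),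
          if_neg (show ¬i ≤ j by omega), if_neg (show ¬i = j + 1 by omega),
          if_neg (show ¬i + 1 ≤ j by omega), if_neg (show ¬i + 1 = j + 1 by omega)]
        rwa [Nat.sub_add_cancel (by omega), ← Nat.add_sub_cancel i 1] at this

section SplitCell

variable (P : TaggedPartition a b) (j : ℕ) (hj : j < P.n) (sL sR : ℝ)

theorem meshLT_splitCell {δ : ℝ} (hP : P.MeshLT δ) {v : ℝ} (hv : v ∈ Ioo (P.t j) (P.t (j + 1)))
    (hsL : sL ∈ Icc (P.t j) v) (hsR : sR ∈ Icc v (P.t (j + 1))) :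
    (P.splitCell j hj v sL sR hv hsL hsR).MeshLT δ := by
  intro i hi
  simp only [splitCell]
  rcases lt_trichotomy i j with h | rfl | h
  · simp only [if_pos h.le, if_pos (Nat.succ_le_of_lt h)]
    exact hP i (by omega)
  · simpa using (sub_lt_sub_right hv.2 _).trans (hP i hj)
  · obtain rfl | h' := (Nat.succ_le_of_lt h).eq_or_lt
    · simpa using (sub_lt_sub_left hv.1 _).trans (hP j hj)
    · have := hP (i - 1) (by change i < P.n + 1 at hi; omega)
      simp only [if_neg (show ¬i ≤ j by omega), if_neg (show ¬i = j + 1 by omega),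
        if_neg (show ¬i + 1 ≤ j by omega), if_neg (show ¬i + 1 = j + 1 by omega)]
      rwa [Nat.sub_add_cancel (by omega), ← Nat.add_sub_cancel i 1] at this

theorem riemannSum_splitCell_sub_riemannSum_splitCell {X : Type*} [AddCommGroup X] [Module ℝ X]
    (f : ℝ → X) {v w : ℝ} (hv : v ∈ Ioo (P.t j) (P.t (j + 1))) (hw : w ∈ Ioo (P.t j) (P.t (j + 1)))
    (hsLv : sL ∈ Icc (P.t j) v) (hsRv : sR ∈ Icc v (P.t (j + 1)))
    (hsLw : sL ∈ Icc (P.t j) w) (hsRw : sR ∈ Icc w (P.t (j + 1))) :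
    riemannSum f (P.splitCell j hj v sL sR hv hsLv hsRv) -
      riemannSum f (P.splitCell j hj w sL sR hw hsLw hsRw) = (v - w) • (f sL - f sR) := by
  simp only [riemannSum, splitCell, ← Finset.sum_sub_distrib]
  have hsub : {j, j + 1} ⊆ Finset.range (P.n + 1) :=
    Finset.insert_subset_iff.2 ⟨Finset.mem_range.2 (by omega),
      Finset.singleton_subset_iff.2 (Finset.mem_range.2 (by omega))⟩
  rw [← Finset.sum_subset hsub fun i _ hi => ?_, Finset.sum_pair (by omega)]
  · split_ifs <;> first | omega | module
  · simp only [Finset.mem_insert, Finset.mem_singleton, not_or] at hi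
    simp [hi.1, hi.2]

end SplitCell

noncomputable def uniform (hab : a < b) (M : ℕ) (hM : 0 < M) : TaggedPartition a b where
  n := M
  t i := a + i * ((b - a) / M)
  s i := a + i * ((b - a) / M)
  npos := hM
  left := by simp
  right := by field_simp; ring
  mono i _ := by
    have : 0 < (b - a) / M := div_pos (by linarith) (by exact_mod_cast hM)
    push_cast; linarith
  tag_mem i _ := by
    have : 0 < (b - a) / M := div_pos (by linarith) (by exact_mod_cast hM)
    constructor <;> push_cast <;> linarith

theorem exists_meshLT (hab : a < b) {δ : ℝ} (hδ : 0 < δ) :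
    ∃ P : TaggedPartition a b, P.MeshLT δ := by
  obtain ⟨M, hM⟩ := exists_nat_gt ((b - a) / δ)
  have hM0 : (0 : ℝ) < M := (div_pos (by linarith) hδ).trans hM
  refine ⟨uniform hab M (by exact_mod_cast hM0), fun i _ => ?_⟩
  simp only [uniform]
  push_cast
  rw [div_lt_comm₀ hδ hM0] at hM
  linarith

theorem exists_mem_Icc (P : TaggedPartition a b) {x : ℝ} (hx : x ∈ Icc a b) :
    ∃ j < P.n, x ∈ Icc (P.t j) (P.t (j + 1)) := by
  have hxn : x ≤ P.t P.n := P.right.symm ▸ hx.2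
  have hex : ∃ k, x ≤ P.t k := ⟨P.n, hxn⟩
  have hle : Nat.find hex ≤ P.n := Nat.find_min' hex hxn
  obtain h0 | hpos := (Nat.find hex).eq_zero_or_pos
  · refine ⟨0, P.npos, ?_, ?_⟩
    · rw [P.left]; exact hx.1
    · exact (h0 ▸ Nat.find_spec hex).trans (P.mono 0 P.npos).le
  · refine ⟨Nat.find hex - 1, by omega, ?_, ?_⟩
    · exact le_of_not_ge (Nat.find_min hex (by omega))
    · rw [Nat.sub_add_cancel hpos]; exact Nat.find_spec hex

theorem exists_pos_le_sub (P : TaggedPartition a b) :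
    ∃ η > 0, ∀ i < P.n, η ≤ P.t (i + 1) - P.t i := by
  obtain ⟨k, hk, hmin⟩ := (Finset.range P.n).exists_min_image (fun i => P.t (i + 1) - P.t i)
    ⟨0, Finset.mem_range.2 P.npos⟩
  rw [Finset.mem_range] at hk
  exact ⟨_, sub_pos.2 (P.mono k hk), fun i hi => hmin i (Finset.mem_range.2 hi)⟩

theorem finite_points (P : TaggedPartition a b) : P.points.Finite :=
  ((Set.finite_Iic P.n).image P.t).subset fun _ ⟨i, hi, h⟩ => ⟨i, hi, h⟩

end TaggedPartition

section InvariantMetric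

theorem dist_sub_zero {G : Type*} [AddGroup G] [PseudoMetricSpace G] [IsIsometricVAdd Gᵃᵒᵖ G]
    (x y : G) : dist (x - y) 0 = dist x y := by
  simpa using dist_sub_right x y y

theorem dist_nsmul_zero_le {M : Type*} [AddMonoid M] [PseudoMetricSpace M]
    [IsIsometricVAdd Mᵃᵒᵖ M] (n : ℕ) (x : M) : dist (n • x) 0 ≤ n * dist x 0 := by
  induction n with
  | zero => simp
  | succ n ih =>
    calc dist ((n + 1) • x) 0 ≤ dist ((n + 1) • x) x + dist x 0 := dist_triangle _ _ _
      _ = dist (n • x) 0 + dist x 0 := by simpa [succ_nsmul] using dist_add_right (n • x) 0 x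
      _ ≤ n * dist x 0 + dist x 0 := by gcongr
      _ = (n + 1 : ℕ) * dist x 0 := by push_cast; ring

variable {X : Type*} [AddCommGroup X] [Module ℝ X] [PseudoMetricSpace X] [IsIsometricVAdd Xᵃᵒᵖ X]

theorem dist_zero_le_mul_dist_inv_smul {n : ℕ} (hn : n ≠ 0) (x : X) :
    dist x 0 ≤ n * dist ((n : ℝ)⁻¹ • x) 0 := by
  have hx : x = n • ((n : ℝ)⁻¹ • x) := by
    rw [← Nat.cast_smul_eq_nsmul ℝ, smul_smul, mul_inv_cancel₀ (Nat.cast_ne_zero.2 hn), one_smul]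
  conv_lhs => rw [hx]
  exact dist_nsmul_zero_le n _

end InvariantMetric

section RiemannSum

variable {X : Type*} [AddCommGroup X] [Module ℝ X] [MetricSpace X] [IsIsometricVAdd Xᵃᵒᵖ X]
  {f : ℝ → X} {a b δ ε : ℝ} {I : X}
  (H : ∀ P : TaggedPartition a b, P.MeshLT δ → dist (riemannSum f P) I < ε)
  {P : TaggedPartition a b} (hP : P.MeshLT δ) {j : ℕ} (hj : j < P.n)
include H hP hj

theorem dist_smul_sub_lt_two_mul {u r sL sR : ℝ} (hu : P.t j < u) (hr : 0 ≤ r)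
    (hur : u + r < P.t (j + 1)) (hsL : sL ∈ Icc (P.t j) u) (hsR : sR ∈ Icc (u + r) (P.t (j + 1))) :
    dist (r • (f sL - f sR)) 0 < 2 * ε := by
  have hu' : u ≤ u + r := le_add_of_nonneg_right hr
  set P₁ := P.splitCell j hj (u + r) sL sR ⟨hu.trans_le hu', hur⟩ ⟨hsL.1, hsL.2.trans hu'⟩ hsR
  set P₂ := P.splitCell j hj u sL sR ⟨hu, hu'.trans_lt hur⟩ hsL ⟨hu'.trans hsR.1, hsR.2⟩
  have hdiff : riemannSum f P₁ - riemannSum f P₂ = r • (f sL - f sR) :=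
    (P.riemannSum_splitCell_sub_riemannSum_splitCell j hj sL sR f _ _ _ _ _ _).trans
      (by rw [add_sub_cancel_left])
  calc dist (r • (f sL - f sR)) 0 = dist (riemannSum f P₁) (riemannSum f P₂) := by
        rw [← hdiff, dist_sub_zero]
    _ ≤ dist (riemannSum f P₁) I + dist (riemannSum f P₂) I := dist_triangle_right _ _ _
    _ < ε + ε := add_lt_add (H _ (P.meshLT_splitCell j hj sL sR hP _ _ _))
        (H _ (P.meshLT_splitCell j hj sL sR hP _ _ _))
    _ = 2 * ε := by ring

theorem exists_mem_points_dist_le {n : ℕ} (hn : 3 < n * (P.t (j + 1) - P.t j)) {x : ℝ}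
    (hx : x ∈ Icc (P.t j) (P.t (j + 1))) : ∃ y ∈ P.points, dist (f y) (f x) ≤ n * (2 * ε) := by
  have hn0 : n ≠ 0 := by rintro rfl; norm_num at hn
  have h3r : 3 * (n : ℝ)⁻¹ < P.t (j + 1) - P.t j := by
    rwa [← div_eq_mul_inv, div_lt_iff₀' (by positivity)]
  have hr : (0 : ℝ) < (n : ℝ)⁻¹ := by positivity
  have hpair : ∀ u sL sR, P.t j < u → u + (n : ℝ)⁻¹ < P.t (j + 1) → sL ∈ Icc (P.t j) u →
      sR ∈ Icc (u + (n : ℝ)⁻¹) (P.t (j + 1)) → dist (f sL) (f sR) ≤ n * (2 * ε) :=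
    fun u sL sR hu hur hsL hsR => by
      rw [← dist_sub_zero]
      exact (dist_zero_le_mul_dist_inv_smul hn0 _).trans
        (by gcongr; exact (dist_smul_sub_lt_two_mul H hP hj hu hr.le hur hsL hsR).le)
  by_cases hfar : P.t j + 2 * (n : ℝ)⁻¹ ≤ x
  · refine ⟨P.t j, ⟨j, hj.le, rfl⟩, hpair (P.t j + (n : ℝ)⁻¹) _ _ (by linarith) (by linarith)
      ⟨le_rfl, by linarith⟩ ⟨by linarith, hx.2⟩⟩
  · refine ⟨P.t (j + 1), ⟨j + 1, hj, rfl⟩, ?_⟩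
    rw [dist_comm]
    exact hpair (P.t j + 2 * (n : ℝ)⁻¹) _ _ (by linarith) (by linarith)
      ⟨hx.1, by linarith⟩ ⟨by linarith, le_rfl⟩

end RiemannSum

theorem riemannIntegrable_bounded_general
    {X : Type*} [MetricSpace X] [AddCommGroup X] [Module ℝ X]
    (hinv : ∀ x y z : X, dist (x + z) (y + z) = dist x y)
    (a b : ℝ) (hab : a < b) (f : ℝ → X) (xbar : X)
    (hf : HasRiemannIntegral f a b xbar) :
    ∃ L > 0, ∀ t ∈ Set.Icc a b, dist 0 (f t) ≤ L := by
  have : IsIsometricVAdd Xᵃᵒᵖ X := ⟨fun c => Isometry.of_dist_eq fun x y => hinv x y c.unop⟩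
  obtain ⟨δ, hδ, H⟩ := hf 1 one_pos
  obtain ⟨P, hP⟩ := TaggedPartition.exists_meshLT hab hδ
  obtain ⟨η, hη, hηle⟩ := P.exists_pos_le_sub
  obtain ⟨n, hn⟩ := exists_nat_gt (3 / η)
  obtain ⟨B, hB⟩ := (P.finite_points.image fun x => dist 0 (f x)).bddAbove
  refine ⟨max B 1 + 2 * n, by positivity, fun t ht => ?_⟩
  obtain ⟨j, hj, htj⟩ := P.exists_mem_Icc ht
  have hnj : 3 < n * (P.t (j + 1) - P.t j) :=
    ((div_lt_iff₀ hη).1 hn).trans_le (by gcongr; exact hηle j hj)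
  obtain ⟨y, hy, hfy⟩ := exists_mem_points_dist_le H hP hj hnj htj
  calc dist 0 (f t) ≤ dist 0 (f y) + dist (f y) (f t) := dist_triangle _ _ _
    _ ≤ max B 1 + n * (2 * 1) :=
      add_le_add ((hB (mem_image_of_mem _ hy)).trans (le_max_left _ _)) hfy
    _ = max B 1 + 2 * n := by ring

/-- a Riemann integrable function into a vector space with a
complete invariant metric is bounded. -/
theorem riemannIntegrable_bounded
    {X : Type*} [MetricSpace X] [AddCommGroup X] [Module ℝ X] [CompleteSpace X]
    (hinv : ∀ x y z : X, dist (x + z) (y + z) = dist x y)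
    (a b : ℝ) (hab : a < b) (f : ℝ → X) (xbar : X)
    (hf : HasRiemannIntegral f a b xbar) :
    ∃ L > 0, ∀ t ∈ Set.Icc a b, dist 0 (f t) ≤ L :=
  riemannIntegrable_bounded_general hinv a b hab f xbar hf
end

section
/- Let X be a vector space with a complete invariant metric d satisfying d(λx, λy) ≤ λ d(x,y) for λ ∈ [0,1). If for every ε > 0 there exists a partition Δ_ε of [a,b] such that d(f(Δ₁), f(Δ₂)) < ε for all tagged partitions Δ₁, Δ₂ having exactly the same partition points as Δ_ε, then for every ε > 0 there exists a partition Δ'_ε such that d(f(Δ₁), f(Δ₂)) < ε for all tagged partitions Δ₁, Δ₂ refining Δ'_ε. -/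
open Set MeasureTheory

namespace TaggedPartition

/-- Merge the two intervals adjacent to the partition point with index `k+1`,
using `σ` as the tag of the merged interval. -/
def mergeAt {a b : ℝ} (P : TaggedPartition a b) (k : ℕ) (σ : ℝ)
    (hk : k + 1 < P.n) (hσ : σ ∈ Set.Icc (P.t k) (P.t (k + 2))) :
    TaggedPartition a b where
  n := P.n - 1
  t := fun i => if i ≤ k then P.t i else P.t (i + 1)
  s := fun i => if i < k then P.s i else if i = k then σ else P.s (i + 1)
  npos := by omega
  left := by simp [P.left]
  right := by
    show (if P.n - 1 ≤ k then P.t (P.n - 1) else P.t (P.n - 1 + 1)) = b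
    rw [if_neg (by omega)]
    have e : P.n - 1 + 1 = P.n := by omega
    rw [e, P.right]
  mono := by
    intro i hi
    split_ifs with h1 h2 h2
    · exact P.mono i (by omega)
    · exact lt_trans (P.mono i (by omega)) (P.mono (i + 1) (by omega))
    · exact absurd h2 (by omega)
    · exact P.mono (i + 1) (by omega)
  tag_mem := by
    intro i hi
    rcases Nat.lt_trichotomy i k with hc | hc | hc
    · simp only [if_pos hc, if_pos (show i ≤ k by omega), if_pos (show i + 1 ≤ k by omega)]
      exact P.tag_mem i (by omega)
    · subst hc
      simp [show ¬ i < i from by omega, show ¬ i + 1 ≤ i from by omega]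
      exact hσ
    · simp only [if_neg (show ¬ i < k by omega), if_neg (show i ≠ k by omega),
        if_neg (show ¬ i ≤ k by omega), if_neg (show ¬ i + 1 ≤ k by omega)]
      exact P.tag_mem (i + 1) (by omega)

variable {a b : ℝ}

@[simp] lemma mergeAt_n (P : TaggedPartition a b) (k : ℕ) (σ : ℝ) (hk : k + 1 < P.n)
    (hσ : σ ∈ Set.Icc (P.t k) (P.t (k + 2))) : (P.mergeAt k σ hk hσ).n = P.n - 1 := rfl
lemma mergeAt_t (P : TaggedPartition a b) (k : ℕ) (σ : ℝ) (hk : k + 1 < P.n)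
    (hσ : σ ∈ Set.Icc (P.t k) (P.t (k + 2))) :
    (P.mergeAt k σ hk hσ).t = fun i => if i ≤ k then P.t i else P.t (i + 1) := rfl
lemma mergeAt_s (P : TaggedPartition a b) (k : ℕ) (σ : ℝ) (hk : k + 1 < P.n)
    (hσ : σ ∈ Set.Icc (P.t k) (P.t (k + 2))) :
    (P.mergeAt k σ hk hσ).s =
    fun i => if i < k then P.s i else if i = k then σ else P.s (i + 1) := rfl

lemma mergeAt_points_subset (P : TaggedPartition a b) (k : ℕ) (σ : ℝ) (hk : k + 1 < P.n)
    (hσ : σ ∈ Set.Icc (P.t k) (P.t (k + 2))) (P₀ : TaggedPartition a b)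
    (hsub : P₀.points ⊆ P.points) (hnot : P.t (k + 1) ∉ P₀.points) :
    P₀.points ⊆ (P.mergeAt k σ hk hσ).points := by
  intro x hx
  obtain ⟨i, hi, hti⟩ := hsub hx
  have hik : i ≠ k + 1 := by rintro rfl; exact hnot (hti ▸ hx)
  by_cases hle : i ≤ k
  · refine ⟨i, ?_, ?_⟩
    · rw [mergeAt_n]; omega
    · rw [mergeAt_t]; simpa [hle] using hti
  · obtain ⟨m, rfl⟩ : ∃ m, i = m + 1 := ⟨i - 1, by omega⟩
    refine ⟨m, ?_, ?_⟩
    · rw [mergeAt_n]; omega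
    · rw [mergeAt_t]
      simpa [show ¬ m ≤ k by omega] using hti

end TaggedPartition

lemma sum_split1 {M : Type*} [AddCommMonoid M] (g : ℕ → M) (k N : ℕ) (h : k < N) :
    ∑ i ∈ Finset.range N, g i =
      (∑ i ∈ Finset.range k, g i) + g k + ∑ i ∈ Finset.Ico (k + 1) N, g i := by
  rw [Finset.range_eq_Ico,
    ← Finset.sum_Ico_consecutive _ (Nat.zero_le k) (le_of_lt h),
    Finset.sum_eq_sum_Ico_succ_bot h, ← Finset.range_eq_Ico]
  abel

lemma sum_split2 {M : Type*} [AddCommMonoid M] (g : ℕ → M) (k N : ℕ) (h : k + 1 < N) :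
    ∑ i ∈ Finset.range N, g i =
      (∑ i ∈ Finset.range k, g i) + g k + g (k + 1) + ∑ i ∈ Finset.Ico (k + 2) N, g i := by
  rw [sum_split1 g k N (by omega), Finset.sum_eq_sum_Ico_succ_bot (by omega : k + 1 < N)]
  abel

lemma mergeAt_sum {X : Type*} [AddCommGroup X] [Module ℝ X] (f : ℝ → X)
    {a b : ℝ} (P : TaggedPartition a b) (k : ℕ) (σ : ℝ)
    (hk : k + 1 < P.n) (hσ : σ ∈ Set.Icc (P.t k) (P.t (k + 2))) :
    riemannSum f (P.mergeAt k σ hk hσ) =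
      (∑ i ∈ Finset.range k, (P.t (i + 1) - P.t i) • f (P.s i))
      + (P.t (k + 2) - P.t k) • f σ
      + ∑ i ∈ Finset.Ico (k + 2) P.n, (P.t (i + 1) - P.t i) • f (P.s i) := by
  unfold riemannSum
  rw [TaggedPartition.mergeAt_n, TaggedPartition.mergeAt_t, TaggedPartition.mergeAt_s,
    sum_split1 _ k (P.n - 1) (by omega)]
  congr 1
  congr 1
  · refine Finset.sum_congr rfl fun i hi => ?_
    rw [Finset.mem_range] at hi
    simp [hi, le_of_lt hi, show i + 1 ≤ k from hi]
  · simp [show ¬ k + 1 ≤ k by omega]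
  · rw [Finset.sum_Ico_eq_sum_range, Finset.sum_Ico_eq_sum_range]
    have e : P.n - 1 - (k + 1) = P.n - (k + 2) := by omega
    rw [e]
    refine Finset.sum_congr rfl fun j _ => ?_
    have e1 : k + 1 + j + 1 = k + 2 + j := by omega
    simp only [show ¬ k + 1 + j ≤ k by omega, show ¬ k + 1 + j < k by omega,
      show ¬ k + 1 + j + 1 ≤ k by omega, show k + 1 + j ≠ k by omega,
      if_neg, if_false]
    rw [e1]

lemma mergeAt_convex {X : Type*} [AddCommGroup X] [Module ℝ X] (f : ℝ → X)
    {a b : ℝ} (P : TaggedPartition a b) (k : ℕ) (hk : k + 1 < P.n)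
    (hσ₁ : P.s k ∈ Set.Icc (P.t k) (P.t (k + 2)))
    (hσ₂ : P.s (k + 1) ∈ Set.Icc (P.t k) (P.t (k + 2))) :
    riemannSum f P =
      ((P.t (k + 1) - P.t k) / (P.t (k + 2) - P.t k)) •
          riemannSum f (P.mergeAt k (P.s k) hk hσ₁)
        + (1 - (P.t (k + 1) - P.t k) / (P.t (k + 2) - P.t k)) •
          riemannSum f (P.mergeAt k (P.s (k + 1)) hk hσ₂) := by
  have h1 : P.t k < P.t (k + 1) := P.mono k (by omega)
  have h2 : P.t (k + 1) < P.t (k + 2) := P.mono (k + 1) (by omega)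
  have hM : P.t (k + 2) - P.t k ≠ 0 := by linarith
  rw [mergeAt_sum, mergeAt_sum]
  rw [show riemannSum f P = ∑ i ∈ Finset.range P.n, (P.t (i + 1) - P.t i) • f (P.s i) from rfl,
    sum_split2 _ k P.n hk]
  match_scalars <;> (field_simp; try ring)

lemma convex_dist_le {X : Type*} [MetricSpace X] [AddCommGroup X] [Module ℝ X]
    (hinv : ∀ x y z : X, dist (x + z) (y + z) = dist x y)
    (hscale' : ∀ l : ℝ, 0 ≤ l → l ≤ 1 → ∀ x y : X, dist (l • x) (l • y) ≤ l * dist x y)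
    {l : ℝ} (h0 : 0 ≤ l) (h1 : l ≤ 1) (x₁ x₂ y : X) :
    dist (l • x₁ + (1 - l) • x₂) y ≤ l * dist x₁ y + (1 - l) * dist x₂ y := by
  have t1 : dist (l • x₁ + (1 - l) • x₂) (l • y + (1 - l) • x₂) = dist (l • x₁) (l • y) :=
    hinv _ _ _
  have t2 : dist (l • y + (1 - l) • x₂) (l • y + (1 - l) • y) = dist ((1 - l) • x₂) ((1 - l) • y) := by
    rw [add_comm (l • y) ((1 - l) • x₂), add_comm (l • y) ((1 - l) • y)]
    exact hinv _ _ _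
  have tri := dist_triangle (l • x₁ + (1 - l) • x₂) (l • y + (1 - l) • x₂) (l • y + (1 - l) • y)
  rw [t1, t2, show l • y + (1 - l) • y = y from by module] at tri
  have b1 := hscale' l h0 h1 x₁ y
  have b2 := hscale' (1 - l) (by linarith) (by linarith) x₂ y
  linarith

lemma points_eq_of_all_mem {a b : ℝ} (P P₀ : TaggedPartition a b)
    (hsub : P₀.points ⊆ P.points) (hall : ∀ i ≤ P.n, P.t i ∈ P₀.points) :
    P.points = P₀.points := by
  refine Set.Subset.antisymm (fun x hx => ?_) hsub
  obtain ⟨i, hi, ht⟩ := hx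
  exact ht ▸ hall i hi

/-- the "same points" Cauchy criterion implies the refinement
Cauchy criterion. -/
theorem samePoints_cauchy_implies_refinement_cauchy
    {X : Type*} [MetricSpace X] [AddCommGroup X] [Module ℝ X] [CompleteSpace X]
    (hinv : ∀ x y z : X, dist (x + z) (y + z) = dist x y)
    (hscale : ∀ l : ℝ, 0 ≤ l → l < 1 → ∀ x y : X, dist (l • x) (l • y) ≤ l * dist x y)
    (a b : ℝ) (hab : a < b) (f : ℝ → X)
    (h : ∀ ε > 0, ∃ P₀ : TaggedPartition a b,
      ∀ P₁ P₂ : TaggedPartition a b, P₁.points = P₀.points → P₂.points = P₀.points →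
        dist (riemannSum f P₁) (riemannSum f P₂) < ε) :
    ∀ ε > 0, ∃ P₀ : TaggedPartition a b,
      ∀ P₁ P₂ : TaggedPartition a b, P₀.points ⊆ P₁.points → P₀.points ⊆ P₂.points →
        dist (riemannSum f P₁) (riemannSum f P₂) < ε := by
  intro ε hε
  obtain ⟨P₀, hP₀⟩ := h (ε / 2) (by linarith)
  have hscale' : ∀ l : ℝ, 0 ≤ l → l ≤ 1 → ∀ x y : X, dist (l • x) (l • y) ≤ l * dist x y := by
    intro l h0 h1 x y
    rcases eq_or_lt_of_le h1 with rfl | hlt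
    · simp
    · exact hscale l h0 hlt x y
  have ha : a ∈ P₀.points := ⟨0, Nat.zero_le _, P₀.left⟩
  have hb : b ∈ P₀.points := ⟨P₀.n, le_rfl, P₀.right⟩
  have key : ∀ N (Q₁ Q₂ : TaggedPartition a b), Q₁.n + Q₂.n ≤ N →
      P₀.points ⊆ Q₁.points → P₀.points ⊆ Q₂.points →
      dist (riemannSum f Q₁) (riemannSum f Q₂) ≤ ε / 2 := by
    intro N
    induction N with
    | zero => intro Q₁ Q₂ hn _ _; have := Q₁.npos; have := Q₂.npos; omega
    | succ N ih =>
      intro Q₁ Q₂ hn hs1 hs2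
      by_cases hq1 : ∀ i ≤ Q₁.n, Q₁.t i ∈ P₀.points
      · by_cases hq2 : ∀ i ≤ Q₂.n, Q₂.t i ∈ P₀.points
        · exact le_of_lt (hP₀ Q₁ Q₂ (points_eq_of_all_mem Q₁ P₀ hs1 hq1)
            (points_eq_of_all_mem Q₂ P₀ hs2 hq2))
        · push_neg at hq2
          obtain ⟨j, hj, hjn⟩ := hq2
          have hj0 : j ≠ 0 := by rintro rfl; rw [Q₂.left] at hjn; exact hjn ha
          have hjN : j ≠ Q₂.n := by rintro rfl; rw [Q₂.right] at hjn; exact hjn hb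
          obtain ⟨k, rfl⟩ : ∃ k, j = k + 1 := ⟨j - 1, by omega⟩
          have hk : k + 1 < Q₂.n := by omega
          have h1 : Q₂.t k < Q₂.t (k + 1) := Q₂.mono k (by omega)
          have h2 : Q₂.t (k + 1) < Q₂.t (k + 2) := Q₂.mono (k + 1) (by omega)
          have hm1 := Q₂.tag_mem k (by omega)
          have hm2 := Q₂.tag_mem (k + 1) (by omega)
          have hσ₁ : Q₂.s k ∈ Set.Icc (Q₂.t k) (Q₂.t (k + 2)) :=
            ⟨hm1.1, le_trans hm1.2 (le_of_lt h2)⟩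
          have hσ₂ : Q₂.s (k + 1) ∈ Set.Icc (Q₂.t k) (Q₂.t (k + 2)) :=
            ⟨le_trans (le_of_lt h1) hm2.1, hm2.2⟩
          have dA := ih (Q₂.mergeAt k (Q₂.s k) hk hσ₁) Q₁
            (by rw [TaggedPartition.mergeAt_n]; omega)
            (TaggedPartition.mergeAt_points_subset Q₂ k _ hk hσ₁ P₀ hs2 hjn) hs1
          have dB := ih (Q₂.mergeAt k (Q₂.s (k + 1)) hk hσ₂) Q₁
            (by rw [TaggedPartition.mergeAt_n]; omega)
            (TaggedPartition.mergeAt_points_subset Q₂ k _ hk hσ₂ P₀ hs2 hjn) hs1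
          rw [dist_comm, mergeAt_convex f Q₂ k hk hσ₁ hσ₂]
          set l := (Q₂.t (k + 1) - Q₂.t k) / (Q₂.t (k + 2) - Q₂.t k) with hl
          have hl0 : 0 ≤ l := div_nonneg (by linarith) (by linarith)
          have hl1 : l ≤ 1 := by rw [hl, div_le_one (by linarith)]; linarith
          have hcd := convex_dist_le hinv hscale' hl0 hl1
            (riemannSum f (Q₂.mergeAt k (Q₂.s k) hk hσ₁))
            (riemannSum f (Q₂.mergeAt k (Q₂.s (k + 1)) hk hσ₂))
            (riemannSum f Q₁)
          have e1 := mul_le_mul_of_nonneg_left dA hl0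
          have e2 := mul_le_mul_of_nonneg_left dB (by linarith : (0:ℝ) ≤ 1 - l)
          linarith
      · push_neg at hq1
        obtain ⟨j, hj, hjn⟩ := hq1
        have hj0 : j ≠ 0 := by rintro rfl; rw [Q₁.left] at hjn; exact hjn ha
        have hjN : j ≠ Q₁.n := by rintro rfl; rw [Q₁.right] at hjn; exact hjn hb
        obtain ⟨k, rfl⟩ : ∃ k, j = k + 1 := ⟨j - 1, by omega⟩
        have hk : k + 1 < Q₁.n := by omega
        have h1 : Q₁.t k < Q₁.t (k + 1) := Q₁.mono k (by omega)
        have h2 : Q₁.t (k + 1) < Q₁.t (k + 2) := Q₁.mono (k + 1) (by omega)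
        have hm1 := Q₁.tag_mem k (by omega)
        have hm2 := Q₁.tag_mem (k + 1) (by omega)
        have hσ₁ : Q₁.s k ∈ Set.Icc (Q₁.t k) (Q₁.t (k + 2)) :=
          ⟨hm1.1, le_trans hm1.2 (le_of_lt h2)⟩
        have hσ₂ : Q₁.s (k + 1) ∈ Set.Icc (Q₁.t k) (Q₁.t (k + 2)) :=
          ⟨le_trans (le_of_lt h1) hm2.1, hm2.2⟩
        have dA := ih (Q₁.mergeAt k (Q₁.s k) hk hσ₁) Q₂
          (by rw [TaggedPartition.mergeAt_n]; omega)
          (TaggedPartition.mergeAt_points_subset Q₁ k _ hk hσ₁ P₀ hs1 hjn) hs2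
        have dB := ih (Q₁.mergeAt k (Q₁.s (k + 1)) hk hσ₂) Q₂
          (by rw [TaggedPartition.mergeAt_n]; omega)
          (TaggedPartition.mergeAt_points_subset Q₁ k _ hk hσ₂ P₀ hs1 hjn) hs2
        rw [mergeAt_convex f Q₁ k hk hσ₁ hσ₂]
        set l := (Q₁.t (k + 1) - Q₁.t k) / (Q₁.t (k + 2) - Q₁.t k) with hl
        have hl0 : 0 ≤ l := div_nonneg (by linarith) (by linarith)
        have hl1 : l ≤ 1 := by rw [hl, div_le_one (by linarith)]; linarith
        have hcd := convex_dist_le hinv hscale' hl0 hl1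
          (riemannSum f (Q₁.mergeAt k (Q₁.s k) hk hσ₁))
          (riemannSum f (Q₁.mergeAt k (Q₁.s (k + 1)) hk hσ₂))
          (riemannSum f Q₂)
        have e1 := mul_le_mul_of_nonneg_left dA hl0
        have e2 := mul_le_mul_of_nonneg_left dB (by linarith : (0:ℝ) ≤ 1 - l)
        linarith
  refine ⟨P₀, fun P₁ P₂ h1 h2 => ?_⟩
  have := key (P₁.n + P₂.n) P₁ P₂ le_rfl h1 h2
  linarith
end

section
/- Let X be a vector space with a complete invariant metric d satisfying d(λx, λy) ≤ λ d(x,y) for λ ∈ [0,1). If F : [a,b] → X is differentiable on [a,b] and F' is continuous on [a,b], then ∫ₐ^τ F'(s) ds = F(τ) − F(a) for every τ ∈ [a,b]. -/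
open Set MeasureTheory
set_option linter.unusedSectionVars false
set_option linter.unusedVariables false

/-- `F` is differentiable at `t` (relative to `[a,b]`) with derivative `x`:
`d(0, F(t+s) − F(t) − s • x) = o(|s|)`. -/
def HasDerivOnIcc {X : Type*} [MetricSpace X] [AddCommGroup X] [Module ℝ X]
    (F : ℝ → X) (x : X) (a b t : ℝ) : Prop :=
  ∀ ε > 0, ∃ δ > 0, ∀ s : ℝ, t + s ∈ Set.Icc a b → |s| < δ →
    dist 0 (F (t + s) - F t - s • x) ≤ ε * |s|

section Aux
variable {X : Type*} [MetricSpace X] [AddCommGroup X] [Module ℝ X]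

theorem my_dist_eq_d0 (hinv : ∀ x y z : X, dist (x + z) (y + z) = dist x y)
    (x y : X) : dist x y = dist 0 (y - x) := by
  have h := hinv 0 (y - x) x
  simpa using h

theorem my_d0_add (hinv : ∀ x y z : X, dist (x + z) (y + z) = dist x y)
    (u v : X) : dist (0:X) (u + v) ≤ dist 0 u + dist 0 v := by
  have h1 : dist u (u + v) = dist 0 v := by
    have := hinv 0 v u
    simpa [add_comm] using this
  calc dist (0:X) (u + v) ≤ dist 0 u + dist u (u + v) := dist_triangle _ _ _
    _ = dist 0 u + dist 0 v := by rw [h1]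

theorem my_d0_neg (hinv : ∀ x y z : X, dist (x + z) (y + z) = dist x y)
    (u : X) : dist (0:X) (-u) = dist 0 u := by
  have h := my_dist_eq_d0 hinv u 0
  rw [zero_sub] at h
  rw [← h, dist_comm]

theorem my_d0_smul (hinv : ∀ x y z : X, dist (x + z) (y + z) = dist x y)
    (hscale : ∀ l : ℝ, 0 ≤ l → l < 1 → ∀ x y : X, dist (l • x) (l • y) ≤ l * dist x y)
    (s : ℝ) (hs : |s| < 1) (x : X) : dist (0:X) (s • x) ≤ |s| * dist 0 x := by
  rcases le_or_gt 0 s with h | h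
  · have := hscale s h (by rwa [abs_of_nonneg h] at hs) x 0
    rw [smul_zero] at this
    rw [dist_comm, dist_comm (0:X) x]
    rwa [abs_of_nonneg h]
  · have habs : |s| = -s := abs_of_neg h
    have := hscale (-s) (by linarith) (by rwa [habs] at hs) x 0
    rw [smul_zero] at this
    have heq : s • x = -((-s) • x) := by rw [neg_smul, neg_neg]
    rw [heq, my_d0_neg hinv, dist_comm, habs]
    rwa [dist_comm (0:X) x]

theorem my_d0_sum (hinv : ∀ x y z : X, dist (x + z) (y + z) = dist x y)
    (n : ℕ) (u : ℕ → X) :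
    dist (0:X) (∑ i ∈ Finset.range n, u i) ≤ ∑ i ∈ Finset.range n, dist 0 (u i) := by
  induction n with
  | zero => simp
  | succ n ih =>
    rw [Finset.sum_range_succ, Finset.sum_range_succ]
    calc dist (0:X) (∑ i ∈ Finset.range n, u i + u n)
        ≤ dist 0 (∑ i ∈ Finset.range n, u i) + dist 0 (u n) := my_d0_add hinv _ _
      _ ≤ _ := by linarith

end Aux

section MVT
variable {X : Type*} [MetricSpace X] [AddCommGroup X] [Module ℝ X]

theorem my_mvt (hinv : ∀ x y z : X, dist (x + z) (y + z) = dist x y)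
    (hscale : ∀ l : ℝ, 0 ≤ l → l < 1 → ∀ x y : X, dist (l • x) (l • y) ≤ l * dist x y)
    (a b : ℝ) (F F' : ℝ → X)
    (hderiv : ∀ t ∈ Set.Icc a b, HasDerivOnIcc F (F' t) a b t)
    (p q : ℝ) (hpq : p ≤ q) (hsub : Set.Icc p q ⊆ Set.Icc a b)
    (y : X) (M : ℝ) (hM : 0 ≤ M) (hy : ∀ t ∈ Set.Icc p q, dist 0 (F' t - y) ≤ M) :
    dist 0 (F q - F p - (q - p) • y) ≤ M * (q - p) := by
  rcases eq_or_lt_of_le hpq with rfl | hlt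
  · simp
  have key : ∀ ε > 0, dist 0 (F q - F p - (q - p) • y) ≤ (M + ε) * (q - p) := by
    intro ε hε
    set S : Set ℝ := {t | t ∈ Set.Icc p q ∧
      dist 0 (F t - F p - (t - p) • y) ≤ (M + ε) * (t - p)} with hS
    have hpS : p ∈ S := by
      constructor
      · exact ⟨le_refl p, hpq⟩
      · simp
    have hne : S.Nonempty := ⟨p, hpS⟩
    have hbdd : BddAbove S := ⟨q, fun t ht => ht.1.2⟩
    set m := sSup S with hm
    have hmq : m ≤ q := csSup_le hne (fun t ht => ht.1.2)
    have hpm : p ≤ m := le_csSup hbdd hpS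
    have hmab : m ∈ Set.Icc a b := hsub ⟨hpm, hmq⟩
    -- consequence of derivative at m with ε = 1
    obtain ⟨δ₀, hδ₀, hd0⟩ := hderiv m hmab 1 one_pos
    -- Step 1 : m ∈ S
    have hmS : dist 0 (F m - F p - (m - p) • y) ≤ (M + ε) * (m - p) := by
      set K : ℝ := 1 + dist 0 (F' m) + dist 0 y with hK
      have hK1 : 1 ≤ K := by
        have := dist_nonneg (x := (0:X)) (y := F' m)
        have := dist_nonneg (x := (0:X)) (y := y)
        simp only [hK]; linarith
      have hKpos : 0 < K := by linarith
      refine le_of_forall_pos_le_add (fun η hη => ?_)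
      set η' : ℝ := min (η / K) (min δ₀ 1) / 2 with hη'
      have hη'pos : 0 < η' := by
        apply half_pos
        exact lt_min (div_pos hη hKpos) (lt_min hδ₀ one_pos)
      have hη'δ : η' < δ₀ := by
        calc η' ≤ min δ₀ 1 / 2 := by
              apply div_le_div_of_nonneg_right _ (by norm_num)  -- check name
              exact min_le_right _ _
          _ < δ₀ := by
              have : min δ₀ 1 ≤ δ₀ := min_le_left _ _
              linarith
      have hη'1 : η' < 1 := by
        have h1 : min δ₀ 1 ≤ 1 := min_le_right _ _
        have : η' ≤ min δ₀ 1 / 2 := by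
          apply div_le_div_of_nonneg_right _ (by norm_num)
          exact min_le_right _ _
        linarith
      have hη'K : η' * K ≤ η := by
        have h1 : η' ≤ η / K / 2 := by
          apply div_le_div_of_nonneg_right _ (by norm_num)
          exact min_le_left _ _
        have h2 : η' ≤ η / K := le_trans h1 (by linarith [div_pos hη hKpos])
        calc η' * K ≤ (η / K) * K := by
              apply mul_le_mul_of_nonneg_right h2 (le_of_lt hKpos)
          _ = η := by field_simp
      obtain ⟨t, htS, htlt⟩ := exists_lt_of_lt_csSup hne (show m - η' < sSup S by linarith)
      have htm : t ≤ m := le_csSup hbdd htS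
      have habs : |t - m| < η' := by
        rw [abs_sub_lt_iff]; constructor <;> linarith
      -- decomposition
      have hdec : F m - F p - (m - p) • y =
          (F m - F t - (m - t) • F' m) + ((m - t) • F' m) + (-((m - t) • y))
            + (F t - F p - (t - p) • y) := by
        have h1 : (m - p) • y = (m - t) • y + (t - p) • y := by
          rw [← add_smul]; ring_nf
        rw [h1]; abel
      have hterm1 : dist (0:X) (F m - F t - (m - t) • F' m) ≤ |t - m| := by
        have := hd0 (t - m) (by
          rw [show m + (t - m) = t by ring]
          exact hsub ⟨htS.1.1, htS.1.2⟩) (lt_trans habs hη'δ)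
        rw [show m + (t - m) = t by ring] at this
        have hneg : F m - F t - (m - t) • F' m = -(F t - F m - (t - m) • F' m) := by
          rw [show (m - t) = -(t - m) by ring, neg_smul]; abel
        rw [hneg, my_d0_neg hinv ]
        linarith [this]
      have hterm2 : dist (0:X) ((m - t) • F' m) ≤ |t - m| * dist 0 (F' m) := by
        have := my_d0_smul hinv hscale (m - t) (by
          rw [show m - t = -(t - m) by ring, abs_neg]; exact lt_trans habs hη'1) (F' m)
        rwa [show |m - t| = |t - m| by rw [show m - t = -(t-m) by ring, abs_neg]] at this
      have hterm3 : dist (0:X) (-((m - t) • y)) ≤ |t - m| * dist 0 y := by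
        rw [my_d0_neg hinv]
        have := my_d0_smul hinv hscale (m - t) (by
          rw [show m - t = -(t - m) by ring, abs_neg]; exact lt_trans habs hη'1) y
        rwa [show |m - t| = |t - m| by rw [show m - t = -(t-m) by ring, abs_neg]] at this
      have hterm4 : dist (0:X) (F t - F p - (t - p) • y) ≤ (M + ε) * (m - p) := by
        refine le_trans htS.2 ?_
        apply mul_le_mul_of_nonneg_left (by linarith) (by linarith)
      have hsum : dist (0:X) (F m - F p - (m - p) • y) ≤
          |t - m| + |t - m| * dist 0 (F' m) + |t - m| * dist 0 y + (M + ε) * (m - p) := by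
        rw [hdec]
        calc dist (0:X) _ ≤ dist 0 ((F m - F t - (m - t) • F' m) + ((m - t) • F' m)
                + (-((m - t) • y))) + dist 0 (F t - F p - (t - p) • y) := my_d0_add hinv _ _
          _ ≤ dist 0 ((F m - F t - (m - t) • F' m) + ((m - t) • F' m))
                + dist 0 (-((m - t) • y)) + dist 0 (F t - F p - (t - p) • y) := by
              linarith [my_d0_add hinv ((F m - F t - (m - t) • F' m) + ((m - t) • F' m)) (-((m - t) • y))]
          _ ≤ dist 0 (F m - F t - (m - t) • F' m) + dist 0 ((m - t) • F' m)
                + dist 0 (-((m - t) • y)) + dist 0 (F t - F p - (t - p) • y) := by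
              linarith [my_d0_add hinv (F m - F t - (m - t) • F' m) ((m - t) • F' m)]
          _ ≤ _ := by linarith
      have hKbound : |t - m| + |t - m| * dist 0 (F' m) + |t - m| * dist 0 y = |t - m| * K := by
        simp only [hK]; ring
      rw [hKbound] at hsum
      have : |t - m| * K ≤ η' * K := by
        apply mul_le_mul_of_nonneg_right (le_of_lt habs) (le_of_lt hKpos)
      linarith
    -- Step 2: m = q
    rcases eq_or_lt_of_le hmq with heq | hmltq
    · rw [← heq]; exact hmS
    · exfalso
      obtain ⟨δ₁, hδ₁, hd1⟩ := hderiv m hmab ε hε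
      set s : ℝ := min (min δ₁ (q - m)) 1 / 2 with hs
      have hspos : 0 < s := half_pos (lt_min (lt_min hδ₁ (by linarith)) one_pos)
      have hsδ : s < δ₁ := by
        have h1 : min (min δ₁ (q - m)) 1 ≤ min δ₁ (q - m) := min_le_left _ _
        have h2 : min δ₁ (q - m) ≤ δ₁ := min_le_left _ _
        simp only [hs]; linarith
      have hsq : m + s ≤ q := by
        have h1 : min (min δ₁ (q - m)) 1 ≤ min δ₁ (q - m) := min_le_left _ _
        have h2 : min δ₁ (q - m) ≤ q - m := min_le_right _ _
        simp only [hs]; linarith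
      have hs1 : s < 1 := by
        have h1 : min (min δ₁ (q - m)) 1 ≤ 1 := min_le_right _ _
        simp only [hs]; linarith
      have hmsab : m + s ∈ Set.Icc a b := hsub ⟨by linarith, hsq⟩
      have hder : dist 0 (F (m + s) - F m - s • F' m) ≤ ε * s := by
        have := hd1 s hmsab (by rwa [abs_of_pos hspos])
        rwa [abs_of_pos hspos] at this
      have hdec : F (m + s) - F p - (m + s - p) • y =
          (F (m + s) - F m - s • F' m) + (s • (F' m - y)) + (F m - F p - (m - p) • y) := by
        have h1 : (m + s - p) • y = s • y + (m - p) • y := by rw [← add_smul]; ring_nf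
        rw [h1, smul_sub]; abel
      have hterm2 : dist (0:X) (s • (F' m - y)) ≤ s * M := by
        have h1 := my_d0_smul hinv hscale s (by rwa [abs_of_pos hspos]) (F' m - y)
        rw [abs_of_pos hspos] at h1
        have h2 : dist (0:X) (F' m - y) ≤ M := hy m ⟨hpm, hmq⟩
        calc dist (0:X) (s • (F' m - y)) ≤ s * dist 0 (F' m - y) := h1
          _ ≤ s * M := mul_le_mul_of_nonneg_left h2 (le_of_lt hspos)
      have hmsS : m + s ∈ S := by
        refine ⟨⟨by linarith, hsq⟩, ?_⟩
        rw [hdec]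
        calc dist (0:X) _ ≤ dist 0 ((F (m + s) - F m - s • F' m) + (s • (F' m - y)))
              + dist 0 (F m - F p - (m - p) • y) := my_d0_add hinv _ _
          _ ≤ dist 0 (F (m + s) - F m - s • F' m) + dist 0 (s • (F' m - y))
              + dist 0 (F m - F p - (m - p) • y) := by
                linarith [my_d0_add hinv (F (m + s) - F m - s • F' m) (s • (F' m - y))]
          _ ≤ ε * s + s * M + (M + ε) * (m - p) := by linarith
          _ = (M + ε) * (m + s - p) := by ring
      have := le_csSup hbdd hmsS
      linarith
  -- conclude
  refine le_of_forall_pos_le_add (fun η hη => ?_)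
  have hqp : 0 < q - p := by linarith
  have := key (η / (q - p)) (div_pos hη hqp)
  have heq : (M + η / (q - p)) * (q - p) = M * (q - p) + η := by field_simp
  linarith [heq ▸ this]

end MVT

theorem partition_t_mono {a b : ℝ} (P : TaggedPartition a b) :
    ∀ j ≤ P.n, ∀ i ≤ j, P.t i ≤ P.t j := by
  intro j
  induction j with
  | zero => intro _ i hi; interval_cases i; exact le_rfl
  | succ j ih =>
    intro hj i hi
    rcases Nat.lt_or_ge i (j+1) with h | h
    · have h1 : P.t i ≤ P.t j := ih (by omega) i (by omega)
      have h2 : P.t j < P.t (j+1) := P.mono j (by omega)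
      linarith
    · have : i = j + 1 := by omega
      rw [this]

/-- fundamental theorem of calculus: if `F` is differentiable on
`[a,b]` with continuous derivative `F'`, then `∫ₐ^τ F' = F τ - F a`. -/
theorem ftc_of_continuous_derivative
    {X : Type*} [MetricSpace X] [AddCommGroup X] [Module ℝ X] [CompleteSpace X]
    (hinv : ∀ x y z : X, dist (x + z) (y + z) = dist x y)
    (hscale : ∀ l : ℝ, 0 ≤ l → l < 1 → ∀ x y : X, dist (l • x) (l • y) ≤ l * dist x y)
    (a b : ℝ) (hab : a < b) (F F' : ℝ → X)
    (hderiv : ∀ t ∈ Set.Icc a b, HasDerivOnIcc F (F' t) a b t)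
    (hcont : ∀ t ∈ Set.Icc a b, ContinuousWithinAt F' (Set.Icc a b) t) :
    ∀ τ ∈ Set.Ioc a b, HasRiemannIntegral F' a τ (F τ - F a) := by
  intro τ hτ
  obtain ⟨haτ, hτb⟩ := hτ
  -- uniform continuity of F' on [a,b]
  have hconton : ContinuousOn F' (Set.Icc a b) := hcont
  have hucont : UniformContinuousOn F' (Set.Icc a b) :=
    (isCompact_Icc).uniformContinuousOn_of_continuous hconton
  intro ε hε
  have hτa : 0 < τ - a := by linarith
  set ε' : ℝ := ε / (2 * (τ - a)) with hε'def
  have hε' : 0 < ε' := by positivity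
  obtain ⟨δ₀, hδ₀, huc⟩ := Metric.uniformContinuousOn_iff.mp hucont ε' hε'
  refine ⟨δ₀, hδ₀, fun P hmesh => ?_⟩
  -- basic facts about the partition
  have hmono := partition_t_mono P
  have htmem : ∀ i ≤ P.n, P.t i ∈ Set.Icc a τ := by
    intro i hi
    constructor
    · have h := hmono i hi 0 (Nat.zero_le _); rwa [P.left] at h
    · have h := hmono P.n le_rfl i hi; rwa [P.right] at h
  have hsmem : ∀ i < P.n, P.s i ∈ Set.Icc a τ := by
    intro i hi
    obtain ⟨h1, h2⟩ := P.tag_mem i hi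
    exact ⟨le_trans (htmem i (by omega)).1 h1, le_trans h2 (htmem (i+1) (by omega)).2⟩
  have hsubab : Set.Icc a τ ⊆ Set.Icc a b := Set.Icc_subset_Icc le_rfl hτb
  -- telescoping
  have htel : ∑ i ∈ Finset.range P.n, (F (P.t (i+1)) - F (P.t i)) = F τ - F a := by
    rw [Finset.sum_range_sub (fun i => F (P.t i))]
    rw [P.left, P.right]
  have hdiff : F τ - F a - riemannSum F' P =
      ∑ i ∈ Finset.range P.n,
        ((F (P.t (i+1)) - F (P.t i)) - (P.t (i+1) - P.t i) • F' (P.s i)) := by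
    rw [Finset.sum_sub_distrib, htel]
    rfl
  -- per-term estimate
  have hterm : ∀ i < P.n,
      dist (0:X) ((F (P.t (i+1)) - F (P.t i)) - (P.t (i+1) - P.t i) • F' (P.s i))
        ≤ ε' * (P.t (i+1) - P.t i) := by
    intro i hi
    have h1 : P.t i ≤ P.t (i+1) := (P.mono i hi).le
    have hsubi : Set.Icc (P.t i) (P.t (i+1)) ⊆ Set.Icc a b := by
      refine subset_trans ?_ hsubab
      apply Set.Icc_subset_Icc (htmem i (by omega)).1 (htmem (i+1) (by omega)).2
    have hy : ∀ t ∈ Set.Icc (P.t i) (P.t (i+1)), dist (0:X) (F' t - F' (P.s i)) ≤ ε' := by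
      intro t ht
      rw [← my_dist_eq_d0 hinv]
      have hta : t ∈ Set.Icc a b := hsubi ht
      have hsa : P.s i ∈ Set.Icc a b := hsubab (hsmem i hi)
      have hd : dist (P.s i) t < δ₀ := by
        rw [Real.dist_eq]
        obtain ⟨hs1, hs2⟩ := P.tag_mem i hi
        obtain ⟨ht1, ht2⟩ := ht
        have : |P.s i - t| ≤ P.t (i+1) - P.t i := by
          rw [abs_le]; constructor <;> linarith
        linarith [hmesh i hi]
      exact (huc (P.s i) hsa t hta hd).le
    have := my_mvt hinv hscale a b F F' hderiv (P.t i) (P.t (i+1)) h1 hsubi (F' (P.s i)) ε' hε'.le hy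
    linarith [this]
  -- assemble
  have hle : dist (riemannSum F' P) (F τ - F a) ≤ ε' * (τ - a) := by
    rw [my_dist_eq_d0 hinv, hdiff]
    calc dist (0:X) _ ≤ ∑ i ∈ Finset.range P.n,
          dist (0:X) ((F (P.t (i+1)) - F (P.t i)) - (P.t (i+1) - P.t i) • F' (P.s i)) :=
            my_d0_sum hinv _ _
      _ ≤ ∑ i ∈ Finset.range P.n, ε' * (P.t (i+1) - P.t i) :=
          Finset.sum_le_sum (fun i hi => hterm i (Finset.mem_range.mp hi))
      _ = ε' * (τ - a) := by
          rw [← Finset.mul_sum, Finset.sum_range_sub P.t, P.left, P.right]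
  have : ε' * (τ - a) = ε / 2 := by
    rw [hε'def]; field_simp
  linarith
end

section
/- The function f : [0,1] → ℓᵖ (1 < p < ∞) defined by f(t) = 0 if t is irrational and f(rₙ) = eₙ for an enumeration (rₙ) of the rationals in [0,1] (eₙ the n-th standard unit vector) is Riemann integrable on [0,1] with integral 0, but f is discontinuous at every irrational point of [0,1]; hence ℓᵖ (1 < p < ∞) does not have the Lebesgue property. -/
open Set MeasureTheory

/-- A metric vector space `Z` has the Lebesgue property: every Riemann
integrable function `[a,b] → Z` is continuous almost everywhere. -/
def LebesgueProperty (Z : Type*) [MetricSpace Z] [AddCommGroup Z] [Module ℝ Z] : Prop :=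
  ∀ (a b : ℝ), a < b → ∀ f : ℝ → Z, (∃ x, HasRiemannIntegral f a b x) →
    volume {t ∈ Set.Icc a b | ¬ ContinuousWithinAt f (Set.Icc a b) t} = 0

/-! A rational tag `rₙ` lies in at most two (adjacent) intervals of a partition, so the
even-indexed and the odd-indexed halves of a Riemann sum of `f` are each of the form
`∑ wᵢ e_{mᵢ}` with distinct `mᵢ`. For mesh `δ` the `ℓᵖ`-norm of such a sum is
`(∑ wᵢ ^ p) ^ (1/p) ≤ (δ ^ (p-1) ∑ wᵢ) ^ (1/p)`, which tends to `0` with `δ` because `p > 1`.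
On the other hand `‖f‖ = 1` on the dense set of rationals while `f = 0` at the irrationals, so `f`
is discontinuous on a set of full measure in `[0,1]`. -/

open Topology

namespace TaggedPartition

variable {a b : ℝ} (P : TaggedPartition a b)

lemma t_strictMonoOn : StrictMonoOn P.t (Iic P.n) :=
  strictMonoOn_Iic_of_lt_succ fun i hi => P.mono i hi

lemma t_le_t {i j : ℕ} (hij : i ≤ j) (hj : j ≤ P.n) : P.t i ≤ P.t j :=
  P.t_strictMonoOn.monotoneOn (hij.trans hj) hj hij

lemma s_mem_Icc {i : ℕ} (hi : i < P.n) : P.s i ∈ Icc a b := by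
  obtain ⟨hti, hsi⟩ := P.tag_mem i hi
  refine ⟨?_, ?_⟩
  · calc a = P.t 0 := P.left.symm
      _ ≤ P.t i := P.t_le_t i.zero_le hi.le
      _ ≤ P.s i := hti
  · calc P.s i ≤ P.t (i + 1) := hsi
      _ ≤ P.t P.n := P.t_le_t hi le_rfl
      _ = b := P.right

lemma t_succ_sub_nonneg {i : ℕ} (hi : i < P.n) : 0 ≤ P.t (i + 1) - P.t i :=
  sub_nonneg.2 (P.mono i hi).le

lemma sum_t_succ_sub : ∑ i ∈ Finset.range P.n, (P.t (i + 1) - P.t i) = b - a := by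
  rw [Finset.sum_range_sub, P.left, P.right]

lemma eq_add_one_of_s_eq {i j : ℕ} (hij : i < j) (hj : j < P.n) (hs : P.s i = P.s j) :
    j = i + 1 := by
  by_contra hne
  have hlt : P.t (i + 1) < P.t j :=
    P.t_strictMonoOn (show i + 1 ≤ P.n by omega) (show j ≤ P.n by omega) (by omega)
  have hsi : P.s i ≤ P.t (i + 1) := (P.tag_mem i (hij.trans hj)).2
  have hsj : P.t j ≤ P.s j := (P.tag_mem j hj).1
  linarith

lemma injOn_s {G : Finset ℕ} (hG : G ⊆ Finset.range P.n) (hsep : ∀ i ∈ G, i + 1 ∉ G) :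
    InjOn P.s G := by
  have key : ∀ i ∈ G, ∀ j ∈ G, i < j → P.s i ≠ P.s j := fun i hi j hj hij hs =>
    hsep i hi (P.eq_add_one_of_s_eq hij (Finset.mem_range.1 (hG hj)) hs ▸ hj)
  intro i hi j hj hs
  by_contra hne
  rcases lt_or_gt_of_ne hne with h | h
  · exact key i hi j hj h hs
  · exact key j hj i hi h hs.symm

lemma norm_riemannSum_le {X : Type*} [SeminormedAddCommGroup X] [Module ℝ X] (f : ℝ → X)
    {C : ℝ} (hC : ∀ G ⊆ Finset.range P.n, (∀ i ∈ G, i + 1 ∉ G) →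
      ‖∑ i ∈ G, (P.t (i + 1) - P.t i) • f (P.s i)‖ ≤ C) :
    ‖riemannSum f P‖ ≤ 2 * C := by
  have hEven := hC ((Finset.range P.n).filter Even) (Finset.filter_subset _ _) fun i hi hi1 => by
    simp only [Finset.mem_filter, Nat.even_add_one] at hi hi1
    exact hi1.2 hi.2
  have hOdd := hC ((Finset.range P.n).filter (¬ Even ·)) (Finset.filter_subset _ _)
    fun i hi hi1 => by
      simp only [Finset.mem_filter, Nat.even_add_one, not_not] at hi hi1
      exact hi.2 hi1.2
  rw [riemannSum, ← Finset.sum_filter_add_sum_filter_not _ Even]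
  exact (norm_add_le _ _).trans (by linarith)

end TaggedPartition

lemma Finset.sum_rpow_le_rpow_sub_one_mul_sum {ι : Type*} (s : Finset ι) {w : ι → ℝ} {δ q : ℝ}
    (hq : 1 ≤ q) (hw : ∀ i ∈ s, 0 ≤ w i ∧ w i ≤ δ) :
    ∑ i ∈ s, w i ^ q ≤ δ ^ (q - 1) * ∑ i ∈ s, w i := by
  rw [Finset.mul_sum]
  refine Finset.sum_le_sum fun i hi => ?_
  obtain ⟨hw0, hwδ⟩ := hw i hi
  calc w i ^ q = w i ^ (q - 1) * w i := by
        rw [← Real.rpow_add_one' hw0 (by linarith), sub_add_cancel]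
    _ ≤ δ ^ (q - 1) * w i := by gcongr

namespace lp

variable {α ι E : Type*} [DecidableEq α] [NormedAddCommGroup E] {p : ENNReal} [Fact (1 ≤ p)]

lemma norm_sum_single_rpow_of_injOn (hp : 0 < p.toReal) {s : Finset ι} {m : ι → α}
    (hm : InjOn m s) (v : ι → E) :
    ‖∑ i ∈ s, lp.single (E := fun _ => E) p (m i) (v i)‖ ^ p.toReal = ∑ i ∈ s, ‖v i‖ ^ p.toReal := by
  obtain rfl | ⟨i₀, -⟩ := s.eq_empty_or_nonempty
  · simp [Real.zero_rpow hp.ne']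
  have : Nonempty ι := ⟨i₀⟩
  have hv : ∀ i ∈ s, v i = v (Function.invFunOn m s (m i)) := fun i hi =>
    congrArg v (hm.leftInvOn_invFunOn hi).symm
  rw [Finset.sum_congr rfl fun i hi => by rw [hv i hi],
    ← Finset.sum_image (f := fun k => lp.single p k (v (Function.invFunOn m s k))) hm,
    lp.norm_sum_single hp, Finset.sum_image hm]
  exact Finset.sum_congr rfl fun i hi => by rw [← hv i hi]

lemma norm_sum_single_le_of_injOn (hp : 1 ≤ p.toReal) {s : Finset ι} {m : ι → α}
    (hm : InjOn m s) {w : ι → ℝ} {δ : ℝ} (hw : ∀ i ∈ s, 0 ≤ w i ∧ w i ≤ δ) :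
    ‖∑ i ∈ s, lp.single (E := fun _ => ℝ) p (m i) (w i)‖ ≤
      (δ ^ (p.toReal - 1) * ∑ i ∈ s, w i) ^ p.toReal⁻¹ := by
  have hp0 : 0 < p.toReal := by linarith
  have hpow : ‖∑ i ∈ s, lp.single (E := fun _ => ℝ) p (m i) (w i)‖ ^ p.toReal ≤
      δ ^ (p.toReal - 1) * ∑ i ∈ s, w i := by
    rw [norm_sum_single_rpow_of_injOn hp0 hm]
    calc ∑ i ∈ s, ‖w i‖ ^ p.toReal = ∑ i ∈ s, w i ^ p.toReal :=
          Finset.sum_congr rfl fun i hi => by rw [Real.norm_of_nonneg (hw i hi).1]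
      _ ≤ _ := s.sum_rpow_le_rpow_sub_one_mul_sum hp hw
  rw [← Real.rpow_rpow_inv (norm_nonneg _) hp0.ne']
  exact Real.rpow_le_rpow (by positivity) hpow (by positivity)

end lp

section Dirichlet

variable {p : ENNReal} [Fact (1 ≤ p)] {r : ℕ → ℝ} {f : ℝ → lp (fun _ : ℕ => ℝ) p} {a b : ℝ}

lemma norm_sum_le_of_eq_single (hp : 1 ≤ p.toReal)
    (hf0 : ∀ t ∈ Icc a b, t ∉ range r → f t = 0) (hfr : ∀ n, f (r n) = lp.single p n 1)
    (P : TaggedPartition a b) {δ : ℝ} (hP : P.MeshLT δ) {G : Finset ℕ}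
    (hG : G ⊆ Finset.range P.n) (hsep : ∀ i ∈ G, i + 1 ∉ G) :
    ‖∑ i ∈ G, (P.t (i + 1) - P.t i) • f (P.s i)‖ ≤
      (δ ^ (p.toReal - 1) * (b - a)) ^ p.toReal⁻¹ := by
  classical
  set E := G.filter fun i => P.s i ∈ range r
  set m : ℕ → ℕ := fun i => Function.invFun r (P.s i)
  have hm : ∀ i ∈ E, r (m i) = P.s i := fun i hi => Function.invFun_eq (Finset.mem_filter.1 hi).2
  have hsum : ∑ i ∈ G, (P.t (i + 1) - P.t i) • f (P.s i) =
      ∑ i ∈ E, lp.single p (m i) (P.t (i + 1) - P.t i) := by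
    rw [Finset.sum_filter]
    refine Finset.sum_congr rfl fun i hi => ?_
    split_ifs with hr
    · rw [← Function.invFun_eq hr, hfr, ← lp.single_smul, smul_eq_mul, mul_one]
    · rw [hf0 _ (P.s_mem_Icc (Finset.mem_range.1 (hG hi))) hr, smul_zero]
  have hEG : E ⊆ G := Finset.filter_subset _ _
  have hinj : InjOn m E := fun i hi j hj hij =>
    P.injOn_s hG hsep (hEG hi) (hEG hj) (by rw [← hm i hi, ← hm j hj, hij])
  have hw : ∀ i ∈ E, 0 ≤ P.t (i + 1) - P.t i ∧ P.t (i + 1) - P.t i ≤ δ := fun i hi =>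
    have hi : i < P.n := Finset.mem_range.1 (hG (hEG hi))
    ⟨P.t_succ_sub_nonneg hi, (hP i hi).le⟩
  have hδ : 0 ≤ δ := (P.t_succ_sub_nonneg P.npos).trans (hP 0 P.npos).le
  have hwidth : ∑ i ∈ E, (P.t (i + 1) - P.t i) ≤ b - a := P.sum_t_succ_sub ▸
    Finset.sum_le_sum_of_subset_of_nonneg (hEG.trans hG) fun i hi _ =>
      P.t_succ_sub_nonneg (Finset.mem_range.1 hi)
  rw [hsum]
  refine (lp.norm_sum_single_le_of_injOn hp hinj hw).trans ?_
  gcongr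
  exact mul_nonneg (by positivity) (Finset.sum_nonneg fun i hi => (hw i hi).1)

lemma hasRiemannIntegral_zero_of_eq_single (hp : 1 < p.toReal)
    (hf0 : ∀ t ∈ Icc a b, t ∉ range r → f t = 0) (hfr : ∀ n, f (r n) = lp.single p n 1) :
    HasRiemannIntegral f a b 0 := by
  intro ε hε
  set bound : ℝ → ℝ := fun δ => 2 * (δ ^ (p.toReal - 1) * (b - a)) ^ p.toReal⁻¹
  have hbound : Continuous bound :=
    continuous_const.mul <| (Real.continuous_rpow_const (by positivity)).comp <|
      (Real.continuous_rpow_const (by linarith)).mul continuous_const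
  have hbound0 : bound 0 = 0 := by
    simp [bound, Real.zero_rpow (sub_ne_zero.2 hp.ne'), Real.zero_rpow (inv_ne_zero (by positivity))]
  have hsmall : ∀ᶠ δ in 𝓝[>] 0, bound δ < ε :=
    ((hbound.tendsto 0).mono_left nhdsWithin_le_nhds).eventually (gt_mem_nhds (by rwa [hbound0]))
  obtain ⟨δ, hδε, hδ⟩ := (hsmall.and self_mem_nhdsWithin).exists
  refine ⟨δ, hδ, fun P hP => ?_⟩
  rw [dist_zero_right]
  exact (P.norm_riemannSum_le f fun G hG hsep =>
    norm_sum_le_of_eq_single hp.le hf0 hfr P hP hG hsep).trans_lt hδε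

end Dirichlet

lemma Icc_subset_closure_rat {a b : ℝ} (hab : a < b) :
    Icc a b ⊆ closure {t ∈ Icc a b | ∃ q : ℚ, (q : ℝ) = t} :=
  calc Icc a b = closure (Ioo a b) := (closure_Ioo hab.ne).symm
    _ ⊆ closure (Ioo a b ∩ range ((↑) : ℚ → ℝ)) :=
      closure_minimal (Rat.denseRange_cast.open_subset_closure_inter isOpen_Ioo) isClosed_closure
    _ ⊆ _ := closure_mono <| inter_subset_inter_left _ Ioo_subset_Icc_self

lemma not_continuousWithinAt_of_eq_single {p : ENNReal} [Fact (1 ≤ p)] (hp : 0 < p) {r : ℕ → ℝ}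
    {f : ℝ → lp (fun _ : ℕ => ℝ) p} (hfr : ∀ n, f (r n) = lp.single p n 1) {s : Set ℝ}
    (hrs : range r ⊆ s) {t : ℝ} (ht : t ∈ closure (range r)) (hft : f t = 0) :
    ¬ ContinuousWithinAt f s t := by
  intro hcont
  have hunit : MapsTo f (range r) (Metric.sphere 0 1) := by
    rintro _ ⟨n, rfl⟩
    rw [mem_sphere_zero_iff_norm, hfr, lp.norm_single hp, norm_one]
  have := (hcont.mono hrs).mem_closure ht hunit
  rw [Metric.isClosed_sphere.closure_eq, hft, mem_sphere_zero_iff_norm, norm_zero] at this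
  exact zero_ne_one this

lemma volume_setOf_irrational_Icc (a b : ℝ) :
    volume {t ∈ Icc a b | Irrational t} = ENNReal.ofReal (b - a) := by
  change volume (Icc a b \ range ((↑) : ℚ → ℝ)) = _
  rw [measure_sdiff_null ((countable_range _).measure_zero volume), Real.volume_Icc]

lemma not_lebesgueProperty_of_not_continuousWithinAt {Z : Type*} [MetricSpace Z] [AddCommGroup Z]
    [Module ℝ Z] {a b : ℝ} (hab : a < b) {f : ℝ → Z} {x : Z} (hf : HasRiemannIntegral f a b x)
    (hdisc : ∀ t ∈ Icc a b, Irrational t → ¬ ContinuousWithinAt f (Icc a b) t) :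
    ¬ LebesgueProperty Z := by
  intro hL
  have hsub : {t ∈ Icc a b | Irrational t} ⊆ {t ∈ Icc a b | ¬ ContinuousWithinAt f (Icc a b) t} :=
    fun t ⟨ht, hirr⟩ => ⟨ht, hdisc t ht hirr⟩
  have hnull := measure_mono_null hsub (hL a b hab f ⟨x, hf⟩)
  rw [volume_setOf_irrational_Icc, ENNReal.ofReal_eq_zero] at hnull
  linarith

theorem lp_not_lebesgueProperty_general (p : ENNReal) [Fact (1 ≤ p)] (hp1 : 1 < p) (hpt : p < ⊤)
    (r : ℕ → ℝ)
    (hrange : Set.range r = {t ∈ Set.Icc (0 : ℝ) 1 | ∃ q : ℚ, (q : ℝ) = t})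
    (f : ℝ → lp (fun _ : ℕ => ℝ) p)
    (hf0 : ∀ t ∈ Set.Icc (0 : ℝ) 1, Irrational t → f t = 0)
    (hfr : ∀ n : ℕ, f (r n) = lp.single p n 1) :
    HasRiemannIntegral f 0 1 0 ∧
      (∀ t ∈ Set.Icc (0 : ℝ) 1, Irrational t →
        ¬ ContinuousWithinAt f (Set.Icc (0 : ℝ) 1) t) ∧
      ¬ LebesgueProperty (lp (fun _ : ℕ => ℝ) p) := by
  have hp : 1 < p.toReal := by
    simpa using (ENNReal.toReal_lt_toReal ENNReal.one_ne_top hpt.ne).2 hp1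
  have hf0' : ∀ t ∈ Icc (0 : ℝ) 1, t ∉ range r → f t = 0 := fun t ht htr =>
    hf0 t ht fun ⟨q, hq⟩ => htr (hrange ▸ ⟨ht, q, hq⟩)
  have hint : HasRiemannIntegral f 0 1 0 := hasRiemannIntegral_zero_of_eq_single hp hf0' hfr
  have hdisc : ∀ t ∈ Icc (0 : ℝ) 1, Irrational t → ¬ ContinuousWithinAt f (Icc 0 1) t :=
    fun t ht hirr => not_continuousWithinAt_of_eq_single (zero_lt_one.trans hp1) hfr
      (hrange ▸ sep_subset _ _) (hrange ▸ Icc_subset_closure_rat zero_lt_one ht) (hf0 t ht hirr)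
  exact ⟨hint, hdisc, not_lebesgueProperty_of_not_continuousWithinAt zero_lt_one hint hdisc⟩

/-- the Dirichlet-type function into `ℓᵖ` (`1 < p < ∞`) sending
irrationals to `0` and the `n`-th rational `rₙ` to `eₙ` is Riemann integrable
with integral `0` but discontinuous at every irrational; hence `ℓᵖ` does not
have the Lebesgue property. -/
theorem lp_not_lebesgueProperty (p : ENNReal) [Fact (1 ≤ p)] (hp1 : 1 < p) (hpt : p < ⊤)
    (r : ℕ → ℝ) (hr : Function.Injective r)
    (hrange : Set.range r = {t ∈ Set.Icc (0 : ℝ) 1 | ∃ q : ℚ, (q : ℝ) = t})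
    (f : ℝ → lp (fun _ : ℕ => ℝ) p)
    (hf0 : ∀ t ∈ Set.Icc (0 : ℝ) 1, Irrational t → f t = 0)
    (hfr : ∀ n : ℕ, f (r n) = lp.single p n 1) :
    HasRiemannIntegral f 0 1 0 ∧
      (∀ t ∈ Set.Icc (0 : ℝ) 1, Irrational t →
        ¬ ContinuousWithinAt f (Set.Icc (0 : ℝ) 1) t) ∧
      ¬ LebesgueProperty (lp (fun _ : ℕ => ℝ) p) :=
  lp_not_lebesgueProperty_general p hp1 hpt r hrange f hf0 hfr
end

section
/- Let ℝ^ω be the countable product of copies of ℝ with the product topology, metrized by the complete invariant metric d(x,y) = Σᵢ min{|xᵢ − yᵢ|, 1}/2ⁱ. Then ℝ^ω has the Lebesgue property: every function f : [a,b] → ℝ^ω that is Riemann integrable with respect to d is continuous almost everywhere on [a,b]. -/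
open Set MeasureTheory

/-- The product metric on `ℝ^ω = ℕ → ℝ`: `d(x,y) = Σ_{i≥1} min{|xᵢ−yᵢ|,1}/2ⁱ`
(indices shifted so that `ℕ` starts at `0`). It induces the product topology. -/
noncomputable def dOmega (x y : ℕ → ℝ) : ℝ :=
  ∑' i : ℕ, min |x i - y i| 1 / 2 ^ (i + 1)

/-- Riemann integrability in `(ℝ^ω, dOmega)`. -/
def HasRiemannIntegralD (f : ℝ → ℕ → ℝ) (a b : ℝ) (x : ℕ → ℝ) : Prop :=
  ∀ ε > 0, ∃ δ > 0, ∀ P : TaggedPartition a b, P.MeshLT δ →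
    dOmega (riemannSum f P) x < ε

/-- Continuity at `t` within `S` with respect to `dOmega`. -/
def ContinuousWithinAtD (f : ℝ → ℕ → ℝ) (S : Set ℝ) (t : ℝ) : Prop :=
  ∀ ε > 0, ∃ δ > 0, ∀ s ∈ S, |s - t| < δ → dOmega (f s) (f t) < ε

/-! Smallness of `dOmega` forces smallness of each coordinate, so every coordinate of `f` is
Riemann integrable; conversely `dOmega` is continuous for the product topology, so `f` is
`dOmega`-continuous wherever all its coordinates are. This reduces the theorem to real functions
`g`, whose discontinuities form the countable union over `c = 1/(m+1)` of the sets where `g`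
oscillates by at least `c`. Such a set is null: on a fine partition, tag every cell whose interior
meets it once at a high and once at a low value of `g`; the two Riemann sums then differ by at
least `c` times the total length of those cells, and integrability makes this difference small. -/

namespace TaggedPartition

variable {a b : ℝ}

theorem exists_mem_Ioo (P : TaggedPartition a b) {x : ℝ} (hx : x ∈ Icc a b)
    (hxP : x ∉ P.points) : ∃ i < P.n, x ∈ Ioo (P.t i) (P.t (i + 1)) := by
  classical
  set i := Nat.findGreatest (fun j => P.t j ≤ x) P.n
  have hi_le : P.t i ≤ x := Nat.findGreatest_spec (P := fun j => P.t j ≤ x) (Nat.zero_le _)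
    (P.left.symm ▸ hx.1)
  have hi_ne : P.t i ≠ x := fun h => hxP ⟨i, Nat.findGreatest_le _, h⟩
  have hi_lt : i < P.n := by
    refine lt_of_le_of_ne (Nat.findGreatest_le _) fun h => hi_ne ?_
    rw [h, P.right] at hi_le ⊢
    exact le_antisymm hi_le hx.2
  exact ⟨i, hi_lt, lt_of_le_of_ne hi_le hi_ne,
    not_le.1 (Nat.findGreatest_is_greatest (Nat.lt_succ_self i) hi_lt)⟩

open Classical in
theorem volume_le_sum_of_subset (P : TaggedPartition a b) {D : Set ℝ} (hD : D ⊆ Icc a b) :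
    volume D ≤ ENNReal.ofReal
      (∑ i ∈ Finset.range P.n with (Ioo (P.t i) (P.t (i + 1)) ∩ D).Nonempty,
        (P.t (i + 1) - P.t i)) := by
  set I := {i ∈ Finset.range P.n | (Ioo (P.t i) (P.t (i + 1)) ∩ D).Nonempty}
  have hcover : D ⊆ P.points ∪ ⋃ i ∈ I, Icc (P.t i) (P.t (i + 1)) := by
    intro x hx
    by_cases hxP : x ∈ P.points
    · exact Or.inl hxP
    obtain ⟨i, hi, hxi⟩ := P.exists_mem_Ioo (hD hx) hxP
    exact Or.inr (mem_biUnion (Finset.mem_filter.2 ⟨Finset.mem_range.2 hi, x, hxi, hx⟩)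
      (Ioo_subset_Icc_self hxi))
  calc volume D ≤ volume P.points + volume (⋃ i ∈ I, Icc (P.t i) (P.t (i + 1))) :=
        (measure_mono hcover).trans (measure_union_le _ _)
    _ ≤ 0 + ∑ i ∈ I, volume (Icc (P.t i) (P.t (i + 1))) := by
        rw [P.finite_points.measure_zero]
        gcongr
        exact measure_biUnion_finset_le _ _
    _ = ENNReal.ofReal (∑ i ∈ I, (P.t (i + 1) - P.t i)) := by
        rw [zero_add, ENNReal.ofReal_sum_of_nonneg fun i hi =>
          sub_nonneg.2 (P.mono i (Finset.mem_range.1 (Finset.mem_filter.1 hi).1)).le]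
        simp only [I, Real.volume_Icc]

end TaggedPartition

theorem riemannSum_apply (f : ℝ → ℕ → ℝ) {a b : ℝ} (P : TaggedPartition a b) (i : ℕ) :
    riemannSum (fun t => f t i) P = riemannSum f P i := by
  simp [riemannSum, Finset.sum_apply]

def OscillatesAt (g : ℝ → ℝ) (c t : ℝ) : Prop :=
  ∀ l < t, ∀ r > t, ∃ s ∈ Icc l r, ∃ s' ∈ Icc l r, c ≤ g s - g s'

theorem exists_oscillatesAt_of_not_continuousWithinAt {g : ℝ → ℝ} {S : Set ℝ} {t : ℝ}
    (hg : ¬ ContinuousWithinAt g S t) : ∃ m : ℕ, OscillatesAt g (1 / (m + 1)) t := by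
  rw [Metric.continuousWithinAt_iff] at hg
  push Not at hg
  simp only [Real.dist_eq] at hg
  obtain ⟨ε, hε, hjump⟩ := hg
  obtain ⟨m, hm⟩ := exists_nat_one_div_lt hε
  refine ⟨m, fun l hl r hr => ?_⟩
  obtain ⟨s, -, hst, hgs⟩ :=
    hjump (min (t - l) (r - t)) (lt_min (sub_pos.2 hl) (sub_pos.2 hr))
  have hs : s ∈ Icc l r := by
    rw [abs_lt] at hst
    constructor <;> linarith [min_le_left (t - l) (r - t), min_le_right (t - l) (r - t)]
  have ht : t ∈ Icc l r := ⟨hl.le, hr.le⟩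
  rcases le_abs'.1 hgs with h | h
  · exact ⟨t, ht, s, hs, by linarith⟩
  · exact ⟨s, hs, t, ht, by linarith⟩

namespace HasRiemannIntegral

variable {g : ℝ → ℝ} {a b y : ℝ}

theorem exists_sum_mul_sub_lt (hg : HasRiemannIntegral g a b y) {ε : ℝ} (hε : 0 < ε) :
    ∃ δ > 0, ∀ P : TaggedPartition a b, P.MeshLT δ → ∀ u v : ℕ → ℝ,
      (∀ i < P.n, u i ∈ Icc (P.t i) (P.t (i + 1)) ∧ v i ∈ Icc (P.t i) (P.t (i + 1))) →
      ∑ i ∈ Finset.range P.n, (P.t (i + 1) - P.t i) * (g (u i) - g (v i)) < ε := by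
  obtain ⟨δ, hδ, hR⟩ := hg (ε / 2) (half_pos hε)
  refine ⟨δ, hδ, fun P hP u v huv => ?_⟩
  have hu := hR { P with s := u, tag_mem := fun i hi => (huv i hi).1 } hP
  have hv := hR { P with s := v, tag_mem := fun i hi => (huv i hi).2 } hP
  simp only [riemannSum, Real.dist_eq, smul_eq_mul, abs_lt] at hu hv
  simp only [mul_sub, Finset.sum_sub_distrib]
  linarith

theorem volume_oscillatesAt_eq_zero (hg : HasRiemannIntegral g a b y) (hab : a < b) {c : ℝ}
    (hc : 0 < c) : volume {t ∈ Icc a b | OscillatesAt g c t} = 0 := by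
  classical
  set D := {t ∈ Icc a b | OscillatesAt g c t}
  refine le_antisymm (ENNReal.le_of_forall_pos_le_add fun ε hε _ => ?_) zero_le
  obtain ⟨δ, hδ, hsum⟩ := hg.exists_sum_mul_sub_lt (mul_pos hc hε)
  obtain ⟨P, hP⟩ := TaggedPartition.exists_meshLT hab hδ
  set bad : ℕ → Prop := fun i => (Ioo (P.t i) (P.t (i + 1)) ∩ D).Nonempty
  have htags : ∀ i, ∃ u v : ℝ, i < P.n → (u ∈ Icc (P.t i) (P.t (i + 1)) ∧
      v ∈ Icc (P.t i) (P.t (i + 1))) ∧ (if bad i then c else 0) ≤ g u - g v := by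
    intro i
    by_cases hi : bad i
    · rw [if_pos hi]
      obtain ⟨t, ⟨hlt, hrt⟩, -, ht⟩ := hi
      obtain ⟨u, hu, v, hv, huv⟩ := ht _ hlt _ hrt
      exact ⟨u, v, fun _ => ⟨⟨hu, hv⟩, huv⟩⟩
    · refine ⟨P.t i, P.t i, fun h => ⟨?_, by simp [hi]⟩⟩
      exact ⟨⟨le_rfl, (P.mono i h).le⟩, le_rfl, (P.mono i h).le⟩
  choose u v huv using htags
  have hlen : c * ∑ i ∈ Finset.range P.n with bad i, (P.t (i + 1) - P.t i) < c * ε :=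
    calc c * ∑ i ∈ Finset.range P.n with bad i, (P.t (i + 1) - P.t i)
        = ∑ i ∈ Finset.range P.n, (P.t (i + 1) - P.t i) * (if bad i then c else 0) := by
          rw [Finset.sum_filter, Finset.mul_sum]
          refine Finset.sum_congr rfl fun i _ => ?_
          split_ifs <;> ring
      _ ≤ ∑ i ∈ Finset.range P.n, (P.t (i + 1) - P.t i) * (g (u i) - g (v i)) := by
          refine Finset.sum_le_sum fun i hi => ?_
          have hi := Finset.mem_range.1 hi
          exact mul_le_mul_of_nonneg_left (huv i hi).2 (sub_nonneg.2 (P.mono i hi).le)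
      _ < c * ε := hsum P hP u v fun i hi => (huv i hi).1
  calc volume D ≤ ENNReal.ofReal (∑ i ∈ Finset.range P.n with bad i, (P.t (i + 1) - P.t i)) :=
        P.volume_le_sum_of_subset fun _ ht => ht.1
    _ ≤ ENNReal.ofReal ε := ENNReal.ofReal_le_ofReal ((mul_lt_mul_iff_right₀ hc).1 hlen).le
    _ = 0 + ε := by simp

theorem volume_not_continuousWithinAt_eq_zero (hg : HasRiemannIntegral g a b y) (hab : a < b) :
    volume {t ∈ Icc a b | ¬ ContinuousWithinAt g (Icc a b) t} = 0 := by
  refine measure_mono_null ?_ (measure_iUnion_null fun m : ℕ =>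
    hg.volume_oscillatesAt_eq_zero hab (c := 1 / (m + 1)) Nat.one_div_pos_of_nat)
  rintro t ⟨ht, hdisc⟩
  obtain ⟨m, hm⟩ := exists_oscillatesAt_of_not_continuousWithinAt hdisc
  exact mem_iUnion.2 ⟨m, ht, hm⟩

end HasRiemannIntegral

theorem dOmega_term_le (x y : ℕ → ℝ) (i : ℕ) :
    ‖min |x i - y i| 1 / 2 ^ (i + 1)‖ ≤ (1 / 2 : ℝ) ^ (i + 1) := by
  have h0 : 0 ≤ min |x i - y i| 1 := le_min (abs_nonneg _) zero_le_one
  rw [Real.norm_of_nonneg (by positivity), one_div_pow]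
  exact div_le_div_of_nonneg_right (min_le_right _ _) (by positivity)

theorem summable_dOmega_term (x y : ℕ → ℝ) :
    Summable fun i => min |x i - y i| 1 / 2 ^ (i + 1) :=
  .of_norm_bounded ((summable_nat_add_iff 1).2 summable_geometric_two) (dOmega_term_le x y)

theorem continuous_dOmega : Continuous fun p : (ℕ → ℝ) × (ℕ → ℝ) => dOmega p.1 p.2 :=
  continuous_tsum (fun i => by fun_prop) ((summable_nat_add_iff 1).2 summable_geometric_two)
    fun i p => dOmega_term_le p.1 p.2 i

theorem abs_sub_lt_of_dOmega_lt {x y : ℕ → ℝ} {ε : ℝ} (i : ℕ)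
    (h : dOmega x y < min ε 1 / 2 ^ (i + 1)) : |x i - y i| < ε := by
  have hterm : min |x i - y i| 1 / 2 ^ (i + 1) ≤ dOmega x y :=
    (summable_dOmega_term x y).le_tsum i fun j _ =>
      div_nonneg (le_min (abs_nonneg _) zero_le_one) (by positivity)
  have hmin : min |x i - y i| 1 < min ε 1 :=
    (div_lt_div_iff_of_pos_right (by positivity)).1 (hterm.trans_lt h)
  by_contra! hε
  exact (min_le_min_right 1 hε).not_gt hmin

theorem HasRiemannIntegralD.apply {f : ℝ → ℕ → ℝ} {a b : ℝ} {x : ℕ → ℝ}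
    (hf : HasRiemannIntegralD f a b x) (i : ℕ) :
    HasRiemannIntegral (fun t => f t i) a b (x i) := fun ε hε => by
  obtain ⟨δ, hδ, hP⟩ := hf (min ε 1 / 2 ^ (i + 1)) (by positivity)
  refine ⟨δ, hδ, fun P hPδ => ?_⟩
  rw [Real.dist_eq, riemannSum_apply]
  exact abs_sub_lt_of_dOmega_lt i (hP P hPδ)

theorem ContinuousWithinAt.continuousWithinAtD {f : ℝ → ℕ → ℝ} {S : Set ℝ} {t : ℝ}
    (hf : ContinuousWithinAt f S t) : ContinuousWithinAtD f S t := by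
  have hd : ContinuousWithinAt (fun s => dOmega (f s) (f t)) S t :=
    continuous_dOmega.continuousAt.comp_continuousWithinAt (hf.prodMk continuousWithinAt_const)
  intro ε hε
  have hd0 : dOmega (f t) (f t) = 0 := by simp [dOmega]
  obtain ⟨δ, hδ, h⟩ := Metric.continuousWithinAt_iff.1 hd ε hε
  refine ⟨δ, hδ, fun s hs hst => ?_⟩
  simpa [hd0, Real.dist_eq] using (le_abs_self _).trans_lt (h hs hst)

/-- `ℝ^ω` with the product topology (metrized by `dOmega`) has
the Lebesgue property. -/
theorem ROmega_lebesgueProperty (a b : ℝ) (hab : a < b) (f : ℝ → ℕ → ℝ)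
    (hf : ∃ x, HasRiemannIntegralD f a b x) :
    volume {t ∈ Set.Icc a b | ¬ ContinuousWithinAtD f (Set.Icc a b) t} = 0 := by
  obtain ⟨x, hx⟩ := hf
  refine measure_mono_null ?_ (measure_iUnion_null fun i =>
    (hx.apply i).volume_not_continuousWithinAt_eq_zero hab)
  rintro t ⟨ht, hdisc⟩
  obtain ⟨i, hi⟩ := not_forall.1 fun hcont =>
    hdisc (continuousWithinAt_pi.2 hcont).continuousWithinAtD
  exact mem_iUnion.2 ⟨i, ht, hi⟩
end
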